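/- arXiv:2504.11815 — 2 statements merged into one kernel-verified Lean document; each statement's English description precedes it below -/
import Mathlib

section
/- For all x, y, z ∈ ℍⁿ_κ, the comparison inequality d(x,y)² + d(x,z)² − 2⟨log_x y, log_x z⟩ ≤ d(y,z)² holds. -/
noncomputable section

/-- Lorentzian inner product on ℝ^{n+1}. -/
def lip {n : ℕ} (x y : Fin (n+1) → ℝ) : ℝ :=
  (∑ i : Fin n, x i.castSucc * y i.castSucc) - x (Fin.last n) * y (Fin.last n)

/-- Lorentzian norm (of vectors with nonnegative self-product). -/
def lnorm {n : ℕ} (x : Fin (n+1) → ℝ) : ℝ := Real.sqrt (lip x x)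

/-- Euclidean dot product. -/
def edot {n : ℕ} (x y : Fin (n+1) → ℝ) : ℝ := ∑ i, x i * y i

/-- The matrix J = diag(1,…,1,−1) as a map. -/
def Jm {n : ℕ} (x : Fin (n+1) → ℝ) : Fin (n+1) → ℝ :=
  fun i => if i = Fin.last n then -(x i) else x i

/-- The κ-hyperbolic space form (hyperboloid model). -/
def Hyp {n : ℕ} (κ : ℝ) : Set (Fin (n+1) → ℝ) :=
  {p | lip p p = -1/κ ∧ 0 < p (Fin.last n)}

/-- Inverse hyperbolic cosine. -/
def arcosh (x : ℝ) : ℝ := Real.log (x + Real.sqrt (x^2 - 1))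

/-- Intrinsic distance on the κ-hyperbolic space form. -/
def dH {n : ℕ} (κ : ℝ) (p q : Fin (n+1) → ℝ) : ℝ :=
  (1 / Real.sqrt κ) * arcosh (-(κ * lip p q))

/-- Lorentzian projection onto the tangent space at p. -/
def projT {n : ℕ} (κ : ℝ) (p x : Fin (n+1) → ℝ) : Fin (n+1) → ℝ :=
  x + (κ * lip p x) • p

/-- Logarithm map of the κ-hyperbolic space form. -/
def logH {n : ℕ} (κ : ℝ) (p q : Fin (n+1) → ℝ) : Fin (n+1) → ℝ :=
  (dH κ p q / lnorm (projT κ p q)) • projT κ p q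

/-- Exponential map of the κ-hyperbolic space form. -/
def expH {n : ℕ} (κ : ℝ) (p v : Fin (n+1) → ℝ) : Fin (n+1) → ℝ :=
  Real.cosh (Real.sqrt κ * lnorm v) • p +
    (Real.sinh (Real.sqrt κ * lnorm v) / (Real.sqrt κ * lnorm v)) • v

/-- The cone spanned by a set. -/
def coneOf {n : ℕ} (C : Set (Fin (n+1) → ℝ)) : Set (Fin (n+1) → ℝ) :=
  {x | ∃ t : ℝ, 0 ≤ t ∧ ∃ p ∈ C, x = t • p}

/-- The Lorentz cone. -/
def LorentzCone {n : ℕ} : Set (Fin (n+1) → ℝ) :=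
  {x | lip x x ≤ 0 ∧ 0 ≤ x (Fin.last n)}

/-- The interior of the Lorentz cone. -/
def LorentzConeInt {n : ℕ} : Set (Fin (n+1) → ℝ) :=
  {x | lip x x < 0 ∧ 0 < x (Fin.last n)}

/-!
Scale the sides of the triangle by `√κ`: `A = √κ d(x,y)`, `B = √κ d(x,z)`, `C = √κ d(y,z)`, and let
`t` be the cosine of the angle at `x` between `log_x y` and `log_x z`. Lorentzian algebra on the
tangent projections gives the hyperbolic law of cosines `cosh C = cosh A cosh B - t sinh A sinh B`,
and the claim, multiplied by `κ`, is the Euclidean comparison `A² + B² - 2ABt ≤ C²`. Since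
`s ↦ cosh √s` is convex on `[0, ∞)` (because `sinh a / a` increases), `cosh √(A² + B² - 2ABt)`
is a convex function of `t ∈ [-1, 1]` that agrees with the affine function
`cosh A cosh B - t sinh A sinh B` at `t = ±1`, hence lies below it; monotonicity of `cosh` on
`[0, ∞)` concludes.
-/

open Real Set

lemma convexOn_sinh : ConvexOn ℝ (Ici 0) sinh := by
  refine MonotoneOn.convexOn_of_deriv (convex_Ici 0) continuous_sinh.continuousOn
    differentiable_sinh.differentiableOn ?_
  rw [Real.deriv_sinh, interior_Ici]
  intro a ha b hb hab
  exact cosh_le_cosh.2 (by rwa [abs_of_pos ha, abs_of_pos hb])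

lemma sinh_div_self_le {a b : ℝ} (ha : 0 < a) (hab : a ≤ b) : sinh a / a ≤ sinh b / b := by
  simpa using convexOn_sinh.secant_mono (a := 0) self_mem_Ici ha.le (ha.le.trans hab)
    ha.ne' (ha.trans_le hab).ne' hab

lemma hasDerivAt_cosh_sqrt {s : ℝ} (hs : 0 < s) :
    HasDerivAt (fun s => cosh √s) (sinh √s / √s / 2) s :=
  ((hasDerivAt_cosh √s).comp s (hasDerivAt_sqrt hs.ne')).congr_deriv (by ring)

lemma convexOn_cosh_sqrt : ConvexOn ℝ (Ici 0) (fun s => cosh √s) := by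
  refine MonotoneOn.convexOn_of_deriv (convex_Ici 0)
    (continuous_cosh.comp continuous_sqrt).continuousOn ?_ ?_ <;> rw [interior_Ici]
  · exact fun s hs => (hasDerivAt_cosh_sqrt hs).differentiableAt.differentiableWithinAt
  · intro s hs r hr hsr
    rw [(hasDerivAt_cosh_sqrt hs).deriv, (hasDerivAt_cosh_sqrt hr).deriv]
    exact div_le_div_of_nonneg_right (sinh_div_self_le (sqrt_pos.2 hs) (sqrt_le_sqrt hsr))
      two_pos.le

lemma cosh_sqrt_le_of_abs_le_one {A B t : ℝ} (hA : 0 ≤ A) (hB : 0 ≤ B) (ht : |t| ≤ 1) :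
    cosh √(A ^ 2 + B ^ 2 - 2 * A * B * t) ≤ cosh A * cosh B - t * (sinh A * sinh B) := by
  obtain ⟨ht₁, ht₂⟩ := abs_le.1 ht
  have h := convexOn_cosh_sqrt.2 (sq_nonneg (A - B)) (sq_nonneg (A + B))
    (by linarith : 0 ≤ (1 + t) / 2) (by linarith : 0 ≤ (1 - t) / 2) (by ring)
  simp only [smul_eq_mul, sqrt_sq_eq_abs, cosh_abs, abs_of_nonneg (add_nonneg hA hB),
    cosh_sub, cosh_add] at h
  rw [show A ^ 2 + B ^ 2 - 2 * A * B * t = (1 + t) / 2 * (A - B) ^ 2 + (1 - t) / 2 * (A + B) ^ 2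
    by ring]
  exact h.trans_eq (by ring)

lemma sq_add_sq_sub_mul_le_sq_of_cosh_eq {A B C t : ℝ} (hA : 0 ≤ A) (hB : 0 ≤ B) (hC : 0 ≤ C)
    (ht : |t| ≤ 1) (hcosh : cosh C = cosh A * cosh B - t * (sinh A * sinh B)) :
    A ^ 2 + B ^ 2 - 2 * A * B * t ≤ C ^ 2 := by
  have h := cosh_sqrt_le_of_abs_le_one hA hB ht
  rw [← hcosh, cosh_le_cosh, abs_of_nonneg (sqrt_nonneg _), abs_of_nonneg hC] at h
  exact (sqrt_le_left hC).1 h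

/-- When `sinh A * sinh B = 0` the quotients below are junk, but then `p = 0` as well. -/
lemma sq_add_sq_sub_div_sinh_mul_le_sq_of_cosh_eq {A B C p : ℝ} (hA : 0 ≤ A) (hB : 0 ≤ B)
    (hC : 0 ≤ C) (hp : |p| ≤ sinh A * sinh B) (hcosh : cosh C = cosh A * cosh B - p) :
    A ^ 2 + B ^ 2 - 2 * (A / sinh A * (B / sinh B)) * p ≤ C ^ 2 := by
  have hsinh : 0 ≤ sinh A * sinh B := (abs_nonneg p).trans hp
  set t := p / (sinh A * sinh B)
  have hpt : t * (sinh A * sinh B) = p := by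
    rcases hsinh.eq_or_lt with h | h
    · rw [← h, mul_zero, eq_comm, ← abs_nonpos_iff, h]
      exact hp
    · exact div_mul_cancel₀ p h.ne'
  have ht : |t| ≤ 1 := by
    rw [abs_div, abs_of_nonneg hsinh]
    exact div_le_one_of_le₀ hp hsinh
  convert sq_add_sq_sub_mul_le_sq_of_cosh_eq hA hB hC ht (by rw [hpt, hcosh]) using 2
  ring

section Lorentz

variable {n : ℕ}

lemma lip_comm (x y : Fin (n+1) → ℝ) : lip x y = lip y x := by
  simp only [lip, mul_comm]

lemma lip_add_left (x y z : Fin (n+1) → ℝ) : lip (x + y) z = lip x z + lip y z := by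
  simp only [lip, Pi.add_apply, add_mul, Finset.sum_add_distrib]
  ring

lemma lip_smul_left (c : ℝ) (x y : Fin (n+1) → ℝ) : lip (c • x) y = c * lip x y := by
  simp only [lip, Pi.smul_apply, smul_eq_mul, mul_assoc, ← Finset.mul_sum]
  ring

lemma lip_add_right (x y z : Fin (n+1) → ℝ) : lip x (y + z) = lip x y + lip x z := by
  rw [lip_comm, lip_add_left, lip_comm y, lip_comm z]

lemma lip_smul_right (c : ℝ) (x y : Fin (n+1) → ℝ) : lip x (c • y) = c * lip x y := by
  rw [lip_comm, lip_smul_left, lip_comm]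

lemma sq_spatial_sum_le (x y : Fin (n+1) → ℝ) :
    (∑ i : Fin n, x i.castSucc * y i.castSucc) ^ 2 ≤
      (∑ i : Fin n, x i.castSucc * x i.castSucc) * ∑ i : Fin n, y i.castSucc * y i.castSucc := by
  simpa only [sq] using Finset.sum_mul_sq_le_sq_mul_sq Finset.univ
    (fun i : Fin n => x i.castSucc) (fun i : Fin n => y i.castSucc)

lemma lip_self_nonneg_of_lip_eq_zero {p v : Fin (n+1) → ℝ} (hp : lip p p < 0)
    (hv : lip p v = 0) : 0 ≤ lip v v := by
  have hcs := sq_spatial_sum_le p v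
  have hp0 : 0 ≤ ∑ i : Fin n, p i.castSucc * p i.castSucc :=
    Finset.sum_nonneg fun i _ => mul_self_nonneg _
  have hv0 : 0 ≤ ∑ i : Fin n, v i.castSucc * v i.castSucc :=
    Finset.sum_nonneg fun i _ => mul_self_nonneg _
  simp only [lip, sub_eq_zero, sub_neg] at hp hv ⊢
  rw [hv] at hcs
  nlinarith

lemma sq_lip_le_of_lip_eq_zero {p v w : Fin (n+1) → ℝ} (hp : lip p p < 0)
    (hv : lip p v = 0) (hw : lip p w = 0) : lip v w ^ 2 ≤ lip v v * lip w w := by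
  have hquad : ∀ r : ℝ, 0 ≤ lip w w * (r * r) + 2 * lip v w * r + lip v v := fun r => by
    have h := lip_self_nonneg_of_lip_eq_zero hp
      (by rw [lip_add_right, lip_smul_right, hv, hw, mul_zero, add_zero] : lip p (v + r • w) = 0)
    simp only [lip_add_left, lip_add_right, lip_smul_left, lip_smul_right, lip_comm w v] at h
    linarith
  have h := discrim_le_zero hquad
  rw [discrim] at h
  linarith

lemma abs_lip_le_lnorm_mul_lnorm {p v w : Fin (n+1) → ℝ} (hp : lip p p < 0)
    (hv : lip p v = 0) (hw : lip p w = 0) : |lip v w| ≤ lnorm v * lnorm w := by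
  rw [lnorm, lnorm, ← sqrt_mul (lip_self_nonneg_of_lip_eq_zero hp hv)]
  exact abs_le_sqrt (sq_lip_le_of_lip_eq_zero hp hv hw)

lemma lip_neg_of_mem_lorentzConeInt {p q : Fin (n+1) → ℝ} (hp : p ∈ LorentzConeInt)
    (hq : q ∈ LorentzConeInt) : lip p q < 0 := by
  obtain ⟨hpp, hp0⟩ := hp
  obtain ⟨hqq, hq0⟩ := hq
  have hcs := sq_spatial_sum_le p q
  have hp0' : 0 ≤ ∑ i : Fin n, p i.castSucc * p i.castSucc :=
    Finset.sum_nonneg fun i _ => mul_self_nonneg _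
  have hq0' : 0 ≤ ∑ i : Fin n, q i.castSucc * q i.castSucc :=
    Finset.sum_nonneg fun i _ => mul_self_nonneg _
  simp only [lip, sub_neg] at hpp hqq ⊢
  nlinarith [mul_pos hp0 hq0]

end Lorentz

section Hyperboloid

variable {n : ℕ} {κ : ℝ}

lemma mem_lorentzConeInt_of_mem_hyp (hκ : 0 < κ) {p : Fin (n+1) → ℝ} (hp : p ∈ Hyp κ) :
    p ∈ LorentzConeInt :=
  ⟨by rw [hp.1]; exact div_neg_of_neg_of_pos neg_one_lt_zero hκ, hp.2⟩

lemma lip_projT_eq_zero (hκ : κ ≠ 0) {x : Fin (n+1) → ℝ} (hx : lip x x = -1/κ)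
    (y : Fin (n+1) → ℝ) : lip x (projT κ x y) = 0 := by
  rw [projT, lip_add_right, lip_smul_right, hx]
  field_simp
  ring

lemma lip_projT_projT (hκ : κ ≠ 0) {x : Fin (n+1) → ℝ} (hx : lip x x = -1/κ)
    (y z : Fin (n+1) → ℝ) :
    lip (projT κ x y) (projT κ x z) = lip y z + κ * lip x y * lip x z := by
  simp only [projT, lip_add_left, lip_add_right, lip_smul_left, lip_smul_right, hx, lip_comm y x]
  field_simp
  ring

/-- Reverse Cauchy–Schwarz: `projT κ p q` is tangent at `p`, so its square `κ ⟨p,q⟩² - 1/κ` is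
nonnegative; the sign comes from both points lying in the future cone. -/
lemma one_le_neg_mul_lip (hκ : 0 < κ) {p q : Fin (n+1) → ℝ} (hp : p ∈ Hyp κ)
    (hq : q ∈ Hyp κ) : 1 ≤ -(κ * lip p q) := by
  have hneg := lip_neg_of_mem_lorentzConeInt (mem_lorentzConeInt_of_mem_hyp hκ hp)
    (mem_lorentzConeInt_of_mem_hyp hκ hq)
  have h := lip_self_nonneg_of_lip_eq_zero (mem_lorentzConeInt_of_mem_hyp hκ hp).1
    (lip_projT_eq_zero hκ.ne' hp.1 q)
  rw [lip_projT_projT hκ.ne' hp.1, hq.1] at h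
  have hsq : (κ * lip p q) ^ 2 - 1 = κ * (-1 / κ + κ * lip p q * lip p q) := by
    field_simp
    ring
  have h1 : 1 ≤ |κ * lip p q| :=
    (one_le_sq_iff_one_le_abs _).1 (by linarith [mul_nonneg hκ.le h])
  rwa [abs_of_neg (mul_neg_of_pos_of_neg hκ hneg)] at h1

lemma sqrt_mul_dH (hκ : 0 < κ) (p q : Fin (n+1) → ℝ) :
    √κ * dH κ p q = Real.arcosh (-(κ * lip p q)) := by
  rw [dH, ← mul_assoc, mul_one_div_cancel (sqrt_pos.2 hκ).ne', one_mul]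
  rfl

lemma cosh_sqrt_mul_dH (hκ : 0 < κ) {p q : Fin (n+1) → ℝ} (hp : p ∈ Hyp κ) (hq : q ∈ Hyp κ) :
    cosh (√κ * dH κ p q) = -(κ * lip p q) := by
  rw [sqrt_mul_dH hκ, cosh_arcosh (one_le_neg_mul_lip hκ hp hq)]

lemma dH_nonneg (hκ : 0 < κ) {p q : Fin (n+1) → ℝ} (hp : p ∈ Hyp κ) (hq : q ∈ Hyp κ) :
    0 ≤ dH κ p q := by
  have h := arcosh_nonneg (one_le_neg_mul_lip hκ hp hq)
  rw [← sqrt_mul_dH hκ] at h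
  exact nonneg_of_mul_nonneg_right h (sqrt_pos.2 hκ)

lemma sqrt_mul_lnorm_projT (hκ : 0 < κ) {x y : Fin (n+1) → ℝ} (hx : x ∈ Hyp κ)
    (hy : y ∈ Hyp κ) : √κ * lnorm (projT κ x y) = sinh (√κ * dH κ x y) := by
  rw [sqrt_mul_dH hκ, sinh_arcosh (one_le_neg_mul_lip hκ hx hy), lnorm,
    ← sqrt_mul hκ.le, lip_projT_projT hκ.ne' hx.1, hy.1]
  congr 1
  field_simp
  ring

lemma logH_eq (hκ : 0 < κ) {x y : Fin (n+1) → ℝ} (hx : x ∈ Hyp κ) (hy : y ∈ Hyp κ) :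
    logH κ x y = ((√κ * dH κ x y) / sinh (√κ * dH κ x y)) • projT κ x y := by
  rw [logH, ← sqrt_mul_lnorm_projT hκ hx hy, mul_div_mul_left _ _ (sqrt_pos.2 hκ).ne']

end Hyperboloid

/-- Comparison inequality for triangles in the κ-hyperbolic space form. -/
theorem comparison_inequality {n : ℕ} (κ : ℝ) (hκ : 0 < κ)
    (x y z : Fin (n+1) → ℝ) (hx : x ∈ Hyp κ) (hy : y ∈ Hyp κ) (hz : z ∈ Hyp κ) :
    dH κ x y ^ 2 + dH κ x z ^ 2 - 2 * lip (logH κ x y) (logH κ x z) ≤ dH κ y z ^ 2 := by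
  have hsκ : 0 < √κ := sqrt_pos.2 hκ
  set A := √κ * dH κ x y
  set B := √κ * dH κ x z
  set C := √κ * dH κ y z
  set p := κ * lip (projT κ x y) (projT κ x z) with hp_def
  have hcosh : cosh C = cosh A * cosh B - p := by
    rw [cosh_sqrt_mul_dH hκ hy hz, cosh_sqrt_mul_dH hκ hx hy, cosh_sqrt_mul_dH hκ hx hz,
      hp_def, lip_projT_projT hκ.ne' hx.1]
    ring
  have hp : |p| ≤ sinh A * sinh B := by
    rw [← sqrt_mul_lnorm_projT hκ hx hy, ← sqrt_mul_lnorm_projT hκ hx hz, abs_mul,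
      abs_of_pos hκ, mul_mul_mul_comm, mul_self_sqrt hκ.le]
    exact mul_le_mul_of_nonneg_left (abs_lip_le_lnorm_mul_lnorm
      (mem_lorentzConeInt_of_mem_hyp hκ hx).1 (lip_projT_eq_zero hκ.ne' hx.1 y)
      (lip_projT_eq_zero hκ.ne' hx.1 z)) hκ.le
  have key := sq_add_sq_sub_div_sinh_mul_le_sq_of_cosh_eq
    (mul_nonneg hsκ.le (dH_nonneg hκ hx hy)) (mul_nonneg hsκ.le (dH_nonneg hκ hx hz))
    (mul_nonneg hsκ.le (dH_nonneg hκ hy hz)) hp hcosh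
  have hsq : ∀ d : ℝ, (√κ * d) ^ 2 = κ * d ^ 2 := fun d => by
    rw [mul_pow, sq_sqrt hκ.le]
  rw [hsq, hsq, hsq] at key
  refine le_of_mul_le_mul_left (key.trans_eq' ?_) hκ
  rw [logH_eq hκ hx hy, logH_eq hκ hx hz, lip_smul_left, lip_smul_right]
  ring
end
end

section
/- Let K ⊆ ℝ^{n+1} be a convex cone. Then y is a Lorentz projection of x into K if and only if y ∈ K, Jy − Jx belongs to the dual cone of K, and (Jy − Jx)ᵀ y = 0; i.e., y solves the linear cone-complementarity problem LCP(−Jx, J, K̄). -/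
noncomputable section

/-! With `w = Jy − Jx` one has `⟨x − y, z − y⟩ = wᵀy − wᵀz`, so `y` is a Lorentz projection
exactly when the linear functional `wᵀ·` is minimized over `K` at `y`. On a cone such a minimum
must be `0` (compare `y` with `2y` and `y/2`), which turns the variational inequality into the
dual-cone and complementarity conditions. -/

open Matrix

theorem LinearMap.isMinOn_iff_nonneg_and_eq_zero {𝕜 E : Type*} [Field 𝕜] [LinearOrder 𝕜]
    [IsStrictOrderedRing 𝕜] [AddCommGroup E] [Module 𝕜 E] (f : E →ₗ[𝕜] 𝕜) {K : Set E}
    (hK : ∀ t : 𝕜, 0 < t → ∀ z ∈ K, t • z ∈ K) {y : E} (hy : y ∈ K) :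
    IsMinOn f K y ↔ (∀ v ∈ K, 0 ≤ f v) ∧ f y = 0 := by
  constructor
  · intro hmin
    have hdouble : f y ≤ f ((2 : 𝕜) • y) := hmin (hK 2 two_pos y hy)
    have hhalf : f y ≤ f ((2⁻¹ : 𝕜) • y) := hmin (hK 2⁻¹ (inv_pos.2 two_pos) y hy)
    rw [map_smul, smul_eq_mul] at hdouble hhalf
    have hzero : f y = 0 := by linarith
    exact ⟨fun v hv => hzero ▸ hmin hv, hzero⟩
  · rintro ⟨hnonneg, hzero⟩ z hz
    exact hzero ▸ hnonneg z hz

theorem edot_eq_dotProduct {n : ℕ} (x y : Fin (n+1) → ℝ) : edot x y = x ⬝ᵥ y := rfl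

theorem lip_eq_edot_Jm {n : ℕ} (x y : Fin (n+1) → ℝ) : lip x y = edot (Jm x) y := by
  have hlast : ∀ i : Fin n, i.castSucc ≠ Fin.last n := fun i => (Fin.castSucc_lt_last i).ne
  simp only [lip, edot, Jm, Fin.sum_univ_castSucc, hlast, if_false, if_true]
  ring

theorem Jm_sub {n : ℕ} (x y : Fin (n+1) → ℝ) : Jm (x - y) = Jm x - Jm y := by
  funext i
  simp only [Jm, Pi.sub_apply]
  split_ifs <;> ring

theorem lip_sub_sub_eq {n : ℕ} (x y z : Fin (n+1) → ℝ) :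
    lip (x - y) (z - y) = (Jm y - Jm x) ⬝ᵥ y - (Jm y - Jm x) ⬝ᵥ z := by
  rw [lip_eq_edot_Jm, edot_eq_dotProduct, Jm_sub, dotProduct_sub, ← neg_sub (Jm y),
    neg_dotProduct, neg_dotProduct]
  ring

theorem lorentz_projection_iff_LCP_general {n : ℕ}
    (K : Set (Fin (n+1) → ℝ))
    (hcone : ∀ t : ℝ, 0 < t → ∀ z ∈ K, t • z ∈ K)
    (x y : Fin (n+1) → ℝ) :
    (y ∈ K ∧ ∀ z ∈ K, lip (x - y) (z - y) ≤ 0) ↔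
      (y ∈ K ∧ (∀ v ∈ K, 0 ≤ edot (Jm y - Jm x) v) ∧ edot (Jm y - Jm x) y = 0) := by
  refine and_congr_right fun hy => ?_
  simp only [edot_eq_dotProduct, lip_sub_sub_eq, sub_nonpos]
  exact (dotProductBilin ℝ ℝ (Jm y - Jm x)).isMinOn_iff_nonneg_and_eq_zero hcone hy

/-- The Lorentz projection into a convex cone is equivalent to a linear
cone-complementarity problem: y is an L-projection of x into K iff y ∈ K,
Jy − Jx lies in the dual cone of K, and (Jy − Jx)ᵀy = 0. -/
theorem lorentz_projection_iff_LCP {n : ℕ}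
    (K : Set (Fin (n+1) → ℝ)) (hconv : Convex ℝ K)
    (hcone : ∀ t : ℝ, 0 < t → ∀ z ∈ K, t • z ∈ K)
    (x y : Fin (n+1) → ℝ) :
    (y ∈ K ∧ ∀ z ∈ K, lip (x - y) (z - y) ≤ 0) ↔
      (y ∈ K ∧ (∀ v ∈ K, 0 ≤ edot (Jm y - Jm x) v) ∧ edot (Jm y - Jm x) y = 0) :=
  lorentz_projection_iff_LCP_general K hcone x y
end
end
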